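/- arXiv:2209.10634 — 3 statements merged into one kernel-verified Lean document; each statement's English description precedes it below -/
import Mathlib

section
/- The unique minimizer of (1/T)‖Y − X‖²_F over Y ∈ ℝ^{n×T} subject to (1/T)YYᵀ = I_n is Y = C^{-1/2} X, where C = (1/T)XXᵀ is assumed positive definite. -/
open Matrix
open scoped MatrixOrder ComplexOrder

/-!
Write `S = C^{1/2}`, so that `X = S Y₀`. For every `Y` with `Y Yᵀ = Y₀ Y₀ᵀ = T • 1` the squared
distance to `X` differs from that of `Y₀` by `tr ((Y - Y₀)ᵀ S (Y - Y₀))`: the quadratic terms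
`tr (Y Yᵀ)` agree, and the cross terms `tr (Y Xᵀ) = tr (S Y Y₀ᵀ)` combine into this quadratic
form. Since `S` is positive definite, the gap is nonnegative and vanishes only when `Y = Y₀`.
-/

namespace Matrix

variable {m n : Type*} [Fintype m] [Fintype n]

theorem trace_mul_transpose_self_eq_sum_sq {R : Type*} [CommRing R] (M : Matrix m n R) :
    trace (M * Mᵀ) = ∑ i, ∑ j, M i j ^ 2 := by
  simp [trace, mul_apply, sq]

theorem trace_mul_transpose_sub_mul_self_sub {R : Type*} [CommRing R] {S : Matrix m m R}
    (hS : Sᵀ = S) {Y Y₀ : Matrix m n R} (hY : Y * Yᵀ = Y₀ * Y₀ᵀ) :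
    trace ((Y - S * Y₀) * (Y - S * Y₀)ᵀ) - trace ((Y₀ - S * Y₀) * (Y₀ - S * Y₀)ᵀ) =
      trace ((Y - Y₀)ᵀ * S * (Y - Y₀)) := by
  have hcyc (A : Matrix m n R) : trace (A * (Y₀ᵀ * S)) = trace (S * (A * Y₀ᵀ)) := by
    rw [← Matrix.mul_assoc, trace_mul_comm]
  have hflip : trace (S * (Y₀ * Yᵀ)) = trace (S * (Y * Y₀ᵀ)) := by
    rw [← trace_transpose, transpose_mul, transpose_mul, transpose_transpose, hS, trace_mul_comm]
  rw [Matrix.mul_assoc, trace_mul_comm (Y - Y₀)ᵀ]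
  simp only [transpose_sub, transpose_mul, hS, Matrix.sub_mul, Matrix.mul_sub, Matrix.mul_assoc,
    trace_sub, hY, hcyc, hflip]
  abel

theorem PosDef.trace_conjTranspose_mul_mul_same_eq_zero_iff {𝕜 : Type*} [RCLike 𝕜]
    {S : Matrix m m 𝕜} (hS : S.PosDef) {B : Matrix m n 𝕜} :
    trace (Bᴴ * S * B) = 0 ↔ B = 0 := by
  classical
  obtain ⟨R, hR, rfl⟩ := CStarAlgebra.isStrictlyPositive_iff_eq_star_mul_self.mp
    hS.isStrictlyPositive
  have hfactor : Bᴴ * (star R * R) * B = (R * B)ᴴ * (R * B) := by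
    simp only [star_eq_conjTranspose, conjTranspose_mul, Matrix.mul_assoc]
  rw [hfactor, trace_conjTranspose_mul_self_eq_zero_iff]
  refine ⟨fun h => ?_, fun h => by rw [h, Matrix.mul_zero]⟩
  rw [← nonsing_inv_mul_cancel_left R B ((isUnit_iff_isUnit_det R).mp hR), h, Matrix.mul_zero]

theorem smul_inv_mul_mul_transpose_eq_one {K : Type*} [Field K] [DecidableEq m]
    {S : Matrix m m K} (hS : Sᵀ = S) (hdet : IsUnit S.det) {c : K} {X : Matrix m n K}
    (hSS : S * S = c • (X * Xᵀ)) :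
    c • ((S⁻¹ * X) * (S⁻¹ * X)ᵀ) = 1 := by
  rw [transpose_mul, transpose_nonsing_inv, hS, Matrix.mul_assoc, ← Matrix.mul_assoc X,
    ← Matrix.mul_smul, ← Matrix.smul_mul, ← hSS, ← Matrix.mul_assoc, ← Matrix.mul_assoc,
    nonsing_inv_mul _ hdet, Matrix.one_mul, mul_nonsing_inv _ hdet]

end Matrix

/-- The unique minimizer of (1/T)‖Y − X‖²_F over Y with (1/T)YYᵀ = I is Y = C^{-1/2}X. -/
theorem stmt_0 {n T : ℕ} (hT : 0 < T) (X : Matrix (Fin n) (Fin T) ℝ)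
    (hC : ((1 / (T : ℝ)) • (X * Xᵀ)).PosDef) :
    let Y₀ : Matrix (Fin n) (Fin T) ℝ := (CFC.sqrt ((1 / (T : ℝ)) • (X * Xᵀ)))⁻¹ * X
    ((1 / (T : ℝ)) • (Y₀ * Y₀ᵀ) = 1) ∧
    ∀ Y : Matrix (Fin n) (Fin T) ℝ, (1 / (T : ℝ)) • (Y * Yᵀ) = 1 →
      ((1 / (T : ℝ)) * ∑ i, ∑ j, (Y₀ i j - X i j) ^ 2
        ≤ (1 / (T : ℝ)) * ∑ i, ∑ j, (Y i j - X i j) ^ 2) ∧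
      ((1 / (T : ℝ)) * ∑ i, ∑ j, (Y i j - X i j) ^ 2
        = (1 / (T : ℝ)) * ∑ i, ∑ j, (Y₀ i j - X i j) ^ 2 → Y = Y₀) := by
  intro Y₀
  set S := CFC.sqrt ((1 / (T : ℝ)) • (X * Xᵀ))
  have hS : S.PosDef := hC.isStrictlyPositive.sqrt.posDef
  have hSsymm : Sᵀ = S := by rw [← conjTranspose_eq_transpose_of_trivial]; exact hS.isHermitian
  have hdet : IsUnit S.det := (isUnit_iff_isUnit_det S).mp hS.isUnit
  have hY₀ : (1 / (T : ℝ)) • (Y₀ * Y₀ᵀ) = 1 :=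
    smul_inv_mul_mul_transpose_eq_one hSsymm hdet (CFC.sqrt_mul_sqrt_self _ hC.posSemidef.nonneg)
  refine ⟨hY₀, fun Y hY => ?_⟩
  have hTinv : 1 / (T : ℝ) ≠ 0 := by positivity
  have hYY : Y * Yᵀ = Y₀ * Y₀ᵀ := smul_right_injective _ hTinv (hY.trans hY₀.symm)
  have hgap := trace_mul_transpose_sub_mul_self_sub hSsymm hYY
  rw [mul_nonsing_inv_cancel_left S X hdet,
    ← conjTranspose_eq_transpose_of_trivial (Y - Y₀)] at hgap
  simp only [trace_mul_transpose_self_eq_sum_sq, Matrix.sub_apply] at hgap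
  refine ⟨?_, fun heq => ?_⟩
  · have hnonneg := (hS.posSemidef.conjTranspose_mul_mul_same (Y - Y₀)).trace_nonneg
    exact mul_le_mul_of_nonneg_left (by linarith) (by positivity)
  · have hzero : trace ((Y - Y₀)ᴴ * S * (Y - Y₀)) = 0 := by
      rw [← hgap, mul_left_cancel₀ hTinv heq, sub_self]
    exact sub_eq_zero.mp (hS.trace_conjTranspose_mul_mul_same_eq_zero_iff.mp hzero)
end

section
/- Under the spectral initialization with σᵢ(0) > λᵢ for some index i, for every ε with 0 < ε < σᵢ(0)² − λᵢ², the first time t at which ℓ(M(t)) ≤ ε is at least σᵢ(0) − √(λᵢ² + ε). -/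
/-!
Each singular value evolves by its own scalar flow `x' = c² / x² - 1`. Its speed is at least
`-1`, so `σᵢ(t) ≥ σᵢ(0) - t`, while `ℓ(M(t)) ≤ ε` forces `σᵢ(t)² ≤ λᵢ² + ε`; together these
bound every hitting time from below. The bound concerns an infimum, so the hitting set must also
be nonempty: along the flow `(c² - x²)²` has derivative `-4 (c² - x²)² / x`, hence it is
nonincreasing, `x` stays bounded, and `(c² - x²)²` then decays exponentially, so `ℓ(M(t)) → 0`.
-/

open Matrix Filter Topology Real

section Conjugation

variable {m R : Type*} [Fintype m] [DecidableEq m] [CommRing R]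

theorem conj_diagonal_mul_conj_diagonal {U : Matrix m m R} (hU : Uᵀ * U = 1) (d e : m → R) :
    U * diagonal d * Uᵀ * (U * diagonal e * Uᵀ) = U * diagonal (d * e) * Uᵀ := by
  calc U * diagonal d * Uᵀ * (U * diagonal e * Uᵀ)
      = U * diagonal d * (Uᵀ * U) * diagonal e * Uᵀ := by simp only [Matrix.mul_assoc]
    _ = U * diagonal (d * e) * Uᵀ := by
      rw [hU, Matrix.mul_one, Matrix.mul_assoc U, diagonal_mul_diagonal]; rfl

theorem sum_sq_conj_diagonal {U : Matrix m m R} (hU : Uᵀ * U = 1) (d : m → R) :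
    ∑ a, ∑ b, (U * diagonal d * Uᵀ) a b ^ 2 = ∑ j, d j ^ 2 := by
  set A := U * diagonal d * Uᵀ
  have hA : Aᵀ = A := by
    simp only [A, transpose_mul, transpose_transpose, diagonal_transpose, Matrix.mul_assoc]
  calc ∑ a, ∑ b, A a b ^ 2 = trace (Aᵀ * A) := by
        simp only [trace, diag, mul_apply, transpose_apply, sq]
        exact Finset.sum_comm
    _ = ∑ j, d j ^ 2 := by
        rw [hA, conj_diagonal_mul_conj_diagonal hU, trace_mul_cycle, hU, Matrix.one_mul,
          trace_diagonal]
        simp only [Pi.mul_apply, sq]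

end Conjugation

section Monotonicity

variable {f f' : ℝ → ℝ}

theorem antitoneOn_of_hasDerivAt_nonpos {s : Set ℝ} (hs : Convex ℝ s)
    (hf : ∀ t ∈ s, HasDerivAt f (f' t) t) (hf' : ∀ t ∈ s, f' t ≤ 0) : AntitoneOn f s :=
  antitoneOn_of_hasDerivWithinAt_nonpos hs (fun t ht => (hf t ht).continuousAt.continuousWithinAt)
    (fun t ht => (hf t (interior_subset ht)).hasDerivWithinAt)
    (fun t ht => hf' t (interior_subset ht))

theorem sub_mul_le_of_neg_le_deriv {K : ℝ} (hf : ∀ t, 0 ≤ t → HasDerivAt f (f' t) t)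
    (hf' : ∀ t, 0 ≤ t → -K ≤ f' t) {t : ℝ} (ht : 0 ≤ t) : f 0 - K * t ≤ f t := by
  have : AntitoneOn (fun s => -f s - K * s) (Set.Ici 0) :=
    antitoneOn_of_hasDerivAt_nonpos (convex_Ici 0)
      (fun s hs => ((hf s hs).neg.sub ((hasDerivAt_id s).const_mul K)))
      (fun s hs => by simp only [mul_one]; linarith [hf' s hs])
  have h := this Set.self_mem_Ici ht ht
  simp only [mul_zero, sub_zero] at h
  linarith

theorem le_mul_exp_of_deriv_le {k : ℝ} (hf : ∀ t, 0 ≤ t → HasDerivAt f (f' t) t)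
    (hf' : ∀ t, 0 ≤ t → f' t ≤ -k * f t) {t : ℝ} (ht : 0 ≤ t) :
    f t ≤ f 0 * exp (-(k * t)) := by
  have : AntitoneOn (fun s => f s * exp (k * s)) (Set.Ici 0) :=
    antitoneOn_of_hasDerivAt_nonpos (convex_Ici 0)
      (fun s hs => (hf s hs).mul ((hasDerivAt_id s).const_mul k).exp)
      (fun s hs => by
        have := hf' s hs
        simp only [id, mul_one]
        nlinarith [exp_pos (k * s)])
  have h := this Set.self_mem_Ici ht ht
  simp only [mul_zero, exp_zero, mul_one] at h
  rw [exp_neg, ← div_eq_mul_inv, le_div_iff₀ (exp_pos _)]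
  exact h

end Monotonicity

structure IsSingularValueFlow (c : ℝ) (x : ℝ → ℝ) : Prop where
  pos : ∀ t, 0 ≤ t → 0 < x t
  hasDerivAt : ∀ t, 0 ≤ t → HasDerivAt x (c ^ 2 / x t ^ 2 - 1) t

namespace IsSingularValueFlow

variable {c : ℝ} {x : ℝ → ℝ}

theorem hasDerivAt_sq_sub_sq_sq (hx : IsSingularValueFlow c x) {t : ℝ} (ht : 0 ≤ t) :
    HasDerivAt (fun s => (c ^ 2 - x s ^ 2) ^ 2) (-(4 * (c ^ 2 - x t ^ 2) ^ 2 / x t)) t := by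
  have hxt : x t ≠ 0 := (hx.pos t ht).ne'
  refine ((((hx.hasDerivAt t ht).fun_pow 2).const_sub (c ^ 2)).fun_pow 2).congr_deriv ?_
  field_simp
  ring

theorem antitoneOn_sq_sub_sq_sq (hx : IsSingularValueFlow c x) :
    AntitoneOn (fun s => (c ^ 2 - x s ^ 2) ^ 2) (Set.Ici 0) :=
  antitoneOn_of_hasDerivAt_nonpos (convex_Ici 0) (fun _ ht => hx.hasDerivAt_sq_sub_sq_sq ht)
    (fun t ht => by have := hx.pos t ht; simp only [Left.neg_nonpos_iff]; positivity)

theorem le_sqrt (hx : IsSingularValueFlow c x) {t : ℝ} (ht : 0 ≤ t) :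
    x t ≤ √(c ^ 2 + |c ^ 2 - x 0 ^ 2|) := by
  have hsq : (c ^ 2 - x t ^ 2) ^ 2 ≤ (c ^ 2 - x 0 ^ 2) ^ 2 :=
    hx.antitoneOn_sq_sub_sq_sq Set.self_mem_Ici ht ht
  have habs : |c ^ 2 - x t ^ 2| ≤ |c ^ 2 - x 0 ^ 2| := sq_le_sq.mp hsq
  refine le_sqrt_of_sq_le ?_
  linarith [neg_abs_le (c ^ 2 - x t ^ 2)]

theorem tendsto_sq_sub_sq_sq (hx : IsSingularValueFlow c x) :
    Tendsto (fun t => (c ^ 2 - x t ^ 2) ^ 2) atTop (𝓝 0) := by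
  set B := √(c ^ 2 + |c ^ 2 - x 0 ^ 2|)
  have hB : 0 < B := (hx.pos 0 le_rfl).trans_le (hx.le_sqrt le_rfl)
  have hdecay : ∀ t, 0 ≤ t →
      (c ^ 2 - x t ^ 2) ^ 2 ≤ (c ^ 2 - x 0 ^ 2) ^ 2 * exp (-(4 / B * t)) := by
    refine fun t ht => le_mul_exp_of_deriv_le (fun _ hs => hx.hasDerivAt_sq_sub_sq_sq hs)
      (fun s hs => ?_) ht
    have hxs := hx.pos s hs
    have : 4 / B * (c ^ 2 - x s ^ 2) ^ 2 ≤ 4 * (c ^ 2 - x s ^ 2) ^ 2 / x s := by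
      rw [div_mul_eq_mul_div, mul_comm]
      exact div_le_div_of_nonneg_left (by positivity) hxs (hx.le_sqrt hs)
    linarith
  have hexp : Tendsto (fun t => (c ^ 2 - x 0 ^ 2) ^ 2 * exp (-(4 / B * t))) atTop (𝓝 0) := by
    simpa using (tendsto_exp_neg_atTop_nhds_zero.comp
      (tendsto_id.const_mul_atTop (by positivity : 0 < 4 / B))).const_mul ((c ^ 2 - x 0 ^ 2) ^ 2)
  exact tendsto_of_tendsto_of_tendsto_of_le_of_le' tendsto_const_nhds hexp
    (Eventually.of_forall fun _ => sq_nonneg _) (eventually_ge_atTop 0 |>.mono hdecay)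

end IsSingularValueFlow

theorem stmt_10_general {n : ℕ} (U : Matrix (Fin n) (Fin n) ℝ) (hU : Uᵀ * U = 1)
    (lam : Fin n → ℝ)
    (C : Matrix (Fin n) (Fin n) ℝ)
    (hCdef : C = U * diagonal (fun i => (lam i) ^ 2) * Uᵀ)
    (σ : ℝ → Fin n → ℝ) (hσpos : ∀ t, 0 ≤ t → ∀ i, 0 < σ t i)
    (hσode : ∀ t, 0 ≤ t → ∀ i,
      HasDerivAt (fun s => σ s i) ((lam i) ^ 2 / (σ t i) ^ 2 - 1) t)
    (i : Fin n) :
    let M : ℝ → Matrix (Fin n) (Fin n) ℝ := fun t => U * diagonal (σ t) * Uᵀ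
    let ℓ : Matrix (Fin n) (Fin n) ℝ → ℝ :=
      fun A => Real.sqrt (∑ a, ∑ b, ((C - A * A) a b) ^ 2)
    ∀ ε : ℝ, 0 < ε → ε < (σ 0 i) ^ 2 - (lam i) ^ 2 →
      σ 0 i - Real.sqrt ((lam i) ^ 2 + ε)
        ≤ sInf {t : ℝ | 0 ≤ t ∧ ℓ (M t) ≤ ε} := by
  intro M ℓ ε hε _
  have hflow (j : Fin n) : IsSingularValueFlow (lam j) (fun s => σ s j) :=
    ⟨fun t ht => hσpos t ht j, fun t ht => hσode t ht j⟩
  have hℓ (t : ℝ) : ℓ (M t) = √(∑ j, (lam j ^ 2 - σ t j ^ 2) ^ 2) := by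
    have : C - M t * M t = U * diagonal (fun j => lam j ^ 2 - σ t j ^ 2) * Uᵀ := by
      rw [hCdef, conj_diagonal_mul_conj_diagonal hU, ← Matrix.sub_mul, ← Matrix.mul_sub,
        diagonal_sub]
      simp only [Pi.mul_apply, sq]
    simp only [ℓ, this, sum_sq_conj_diagonal hU]
  have hlim : Tendsto (fun t => ℓ (M t)) atTop (𝓝 0) := by
    simpa [hℓ] using (tendsto_finsetSum Finset.univ fun j _ =>
      (hflow j).tendsto_sq_sub_sq_sq).sqrt
  obtain ⟨T, hT⟩ := ((eventually_ge_atTop 0).and (hlim.eventually (ge_mem_nhds hε))).exists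
  refine le_csInf ⟨T, hT⟩ fun t ⟨ht, hℓt⟩ => ?_
  have hlower : σ 0 i - t ≤ σ t i := by
    simpa using sub_mul_le_of_neg_le_deriv (K := 1) (fun s hs => hσode s hs i)
      (fun s _ => by linarith [div_nonneg (sq_nonneg (lam i)) (sq_nonneg (σ s i))]) ht
  have hsq : σ t i ^ 2 - lam i ^ 2 ≤ ε := by
    calc σ t i ^ 2 - lam i ^ 2 ≤ |lam i ^ 2 - σ t i ^ 2| :=
        (le_abs_self _).trans_eq (abs_sub_comm _ _)
      _ = √((lam i ^ 2 - σ t i ^ 2) ^ 2) := (sqrt_sq_eq_abs _).symm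
      _ ≤ ℓ (M t) := hℓ t ▸ sqrt_le_sqrt (Finset.single_le_sum
          (f := fun j => (lam j ^ 2 - σ t j ^ 2) ^ 2) (fun j _ => sq_nonneg _) (Finset.mem_univ i))
      _ ≤ ε := hℓt
  have hupper : σ t i ≤ √(lam i ^ 2 + ε) := le_sqrt_of_sq_le (by linarith)
  linarith

/-- Spectral initialization with σᵢ(0) > λᵢ for some i: for every ε ∈ (0, σᵢ(0)² − λᵢ²),
the first time at which ℓ(M(t)) ≤ ε is at least σᵢ(0) − √(λᵢ² + ε). -/
theorem stmt_10 {n : ℕ} (U : Matrix (Fin n) (Fin n) ℝ) (hU : Uᵀ * U = 1)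
    (lam : Fin n → ℝ) (hlam : ∀ i, 0 < lam i)
    (C : Matrix (Fin n) (Fin n) ℝ)
    (hCdef : C = U * diagonal (fun i => (lam i) ^ 2) * Uᵀ)
    (σ : ℝ → Fin n → ℝ) (hσpos : ∀ t, 0 ≤ t → ∀ i, 0 < σ t i)
    (hσode : ∀ t, 0 ≤ t → ∀ i,
      HasDerivAt (fun s => σ s i) ((lam i) ^ 2 / (σ t i) ^ 2 - 1) t)
    (i : Fin n) (h0 : lam i < σ 0 i) :
    let M : ℝ → Matrix (Fin n) (Fin n) ℝ := fun t => U * diagonal (σ t) * Uᵀ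
    let ℓ : Matrix (Fin n) (Fin n) ℝ → ℝ :=
      fun A => Real.sqrt (∑ a, ∑ b, ((C - A * A) a b) ^ 2)
    ∀ ε : ℝ, 0 < ε → ε < (σ 0 i) ^ 2 - (lam i) ^ 2 →
      σ 0 i - Real.sqrt ((lam i) ^ 2 + ε)
        ≤ sInf {t : ℝ | 0 ≤ t ∧ ℓ (M t) ≤ ε} :=
  stmt_10_general U hU lam C hCdef σ hσpos hσode i
end

section
/- Let A(t) be a curve of symmetric positive definite matrices solving dA/dt = A⁻¹C + CA⁻¹ − 2A. Then d/dt ℓ(A(t))² = −4ℓ(A(t))² − 4‖A(t)^{−1/2}(A(t)² − C)A(t)^{1/2}‖²_F, where ℓ(A) := ‖C − A²‖_F. In particular, d/dt ℓ(A(t))² ≤ −4ℓ(A(t))². -/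
/-!
With `E = A² - C`, which is symmetric, the equation gives
`d(A²)/dt = A'A + AA' = -2E - A⁻¹EA - AEA⁻¹`. Since `ℓ² = tr (E²)`, its derivative is
`2 tr (E · d(A²)/dt) = -4 tr (E²) - 2 tr (EA⁻¹EA) - 2 tr (EAEA⁻¹)`, and transposition shows that
the last two traces agree. Writing `A = S²` with `S` the symmetric square root,
`tr (EAEA⁻¹) = tr (S⁻¹ES (S⁻¹ES)ᵀ)` is the squared Frobenius norm of `S⁻¹ES`.
-/

open Matrix

noncomputable def Matrix.PosSemidef.sqrt {m 𝕜 : Type*} [Fintype m] [DecidableEq m] [RCLike 𝕜]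
    [PartialOrder 𝕜] {M : Matrix m m 𝕜} (hM : M.PosSemidef) : Matrix m m 𝕜 :=
  hM.1.eigenvectorUnitary.1 * diagonal ((↑) ∘ (√·) ∘ hM.1.eigenvalues) *
    (star hM.1.eigenvectorUnitary : Matrix m m 𝕜)

namespace Matrix

variable {l m n : Type*} [Fintype m]

theorem sum_sum_mul_eq_trace_mul_transpose [Fintype n] {R : Type*} [CommSemiring R]
    (M N : Matrix m n R) : ∑ i, ∑ j, M i j * N i j = trace (M * Nᵀ) := by
  simp only [trace, diag, mul_apply, transpose_apply]

theorem sum_sum_sq_eq_trace_mul_transpose [Fintype n] {R : Type*} [CommSemiring R]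
    (M : Matrix m n R) : ∑ i, ∑ j, M i j ^ 2 = trace (M * Mᵀ) := by
  simp only [← sum_sum_mul_eq_trace_mul_transpose, sq]

theorem IsSymm.trace_mul_transpose {R : Type*} [CommSemiring R] {E : Matrix m m R}
    (hE : E.IsSymm) (G : Matrix m m R) : trace (E * Gᵀ) = trace (E * G) := by
  rw [← trace_transpose_mul, hE.eq, transpose_transpose]

section Deriv

variable {𝕜 : Type*} [NontriviallyNormedField 𝕜]

theorem hasDerivAt_mul_apply {F : 𝕜 → Matrix l m 𝕜} {G : 𝕜 → Matrix m n 𝕜}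
    {F' : Matrix l m 𝕜} {G' : Matrix m n 𝕜} {t : 𝕜}
    (hF : ∀ i j, HasDerivAt (fun s => F s i j) (F' i j) t)
    (hG : ∀ i j, HasDerivAt (fun s => G s i j) (G' i j) t) (i : l) (j : n) :
    HasDerivAt (fun s => (F s * G s) i j) ((F' * G t + F t * G') i j) t := by
  simp only [mul_apply, add_apply, ← Finset.sum_add_distrib]
  exact HasDerivAt.fun_sum fun k _ => (hF i k).mul (hG k j)

theorem hasDerivAt_sum_sum_sq_apply [Fintype n] {F : 𝕜 → Matrix m n 𝕜} {F' : Matrix m n 𝕜}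
    {t : 𝕜} (hF : ∀ i j, HasDerivAt (fun s => F s i j) (F' i j) t) :
    HasDerivAt (fun s => ∑ i, ∑ j, F s i j ^ 2) (2 * trace (F t * F'ᵀ)) t := by
  rw [← sum_sum_mul_eq_trace_mul_transpose, Finset.mul_sum]
  refine HasDerivAt.fun_sum fun i _ => ?_
  rw [Finset.mul_sum]
  refine HasDerivAt.fun_sum fun j _ => ?_
  exact ((hF i j).fun_pow 2).congr_deriv (by push_cast; ring)

end Deriv

variable [DecidableEq m]

theorem IsSymm.trace_mul_inv_mul_mul {R : Type*} [CommRing R] {A E : Matrix m m R}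
    (hA : A.IsSymm) (hE : E.IsSymm) : trace (E * A⁻¹ * E * A) = trace (E * A * E * A⁻¹) := by
  rw [← trace_transpose]
  simp only [transpose_mul, transpose_nonsing_inv, hA.eq, hE.eq, ← Matrix.mul_assoc]
  rw [trace_mul_comm]
  simp only [Matrix.mul_assoc]

theorem sum_sum_sq_inv_mul_mul {R : Type*} [CommRing R] {S E : Matrix m m R}
    (hS : S.IsSymm) (hE : E.IsSymm) :
    ∑ i, ∑ j, (S⁻¹ * E * S) i j ^ 2 = trace (E * (S * S) * E * (S * S)⁻¹) := by
  rw [sum_sum_sq_eq_trace_mul_transpose, Matrix.mul_inv_rev]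
  simp only [transpose_mul, transpose_nonsing_inv, hS.eq, hE.eq, Matrix.mul_assoc]
  rw [trace_mul_comm]
  simp only [Matrix.mul_assoc]

theorem PosSemidef.sqrt_mul_self {M : Matrix m m ℝ} (hM : M.PosSemidef) :
    hM.sqrt * hM.sqrt = M := by
  set U : Matrix m m ℝ := hM.1.eigenvectorUnitary.1
  set D : Matrix m m ℝ := diagonal ((RCLike.ofReal : ℝ → ℝ) ∘ (√·) ∘ hM.1.eigenvalues)
  have hU : star U * U = 1 := Unitary.coe_star_mul_self _
  have hD : D * D = diagonal ((RCLike.ofReal : ℝ → ℝ) ∘ hM.1.eigenvalues) := by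
    rw [diagonal_mul_diagonal]
    congr 1
    funext i
    simp [Real.mul_self_sqrt (hM.eigenvalues_nonneg i)]
  calc hM.sqrt * hM.sqrt = U * (D * (star U * U) * D) * star U := by
        simp only [PosSemidef.sqrt, U, D, Matrix.mul_assoc]
    _ = M := by
      rw [hU, Matrix.mul_one, hD]
      conv_rhs => rw [hM.1.spectral_theorem, Unitary.conjStarAlgAut_apply]

theorem PosSemidef.isSymm_sqrt {M : Matrix m m ℝ} (hM : M.PosSemidef) : hM.sqrt.IsSymm := by
  simp [PosSemidef.sqrt, IsSymm, transpose_mul, Matrix.mul_assoc, star_eq_conjTranspose]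

noncomputable def sqrtFlowField {R : Type*} [CommRing R] (C A : Matrix m m R) : Matrix m m R :=
  A⁻¹ * C + C * A⁻¹ - (2 : R) • A

theorem sqrtFlowField_mul_add_mul_sqrtFlowField {R : Type*} [CommRing R] {A : Matrix m m R}
    (hA : IsUnit A.det) (C : Matrix m m R) :
    sqrtFlowField C A * A + A * sqrtFlowField C A =
      -(2 : R) • (A * A - C) - A⁻¹ * (A * A - C) * A - A * (A * A - C) * A⁻¹ := by
  simp only [sqrtFlowField, mul_sub, sub_mul, add_mul, mul_add, Matrix.mul_assoc,
    nonsing_inv_mul_cancel_left _ _ hA, mul_nonsing_inv_cancel_left _ _ hA,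
    mul_nonsing_inv _ hA, nonsing_inv_mul _ hA, mul_one, Matrix.mul_smul, Matrix.smul_mul]
  module

theorem trace_mul_sqrtFlowField_mul_add_mul_sqrtFlowField {R : Type*} [CommRing R]
    {A C : Matrix m m R} (hdet : IsUnit A.det) (hA : A.IsSymm) (hE : (A * A - C).IsSymm) :
    trace ((A * A - C) * (sqrtFlowField C A * A + A * sqrtFlowField C A)) =
      -2 * trace ((A * A - C) * (A * A - C)) -
        2 * trace ((A * A - C) * A * (A * A - C) * A⁻¹) := by
  rw [sqrtFlowField_mul_add_mul_sqrtFlowField hdet]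
  generalize A * A - C = E at hE ⊢
  simp only [Matrix.mul_sub, Matrix.mul_smul, trace_sub, trace_smul, ← Matrix.mul_assoc,
    hA.trace_mul_inv_mul_mul hE, smul_eq_mul]
  ring

end Matrix

/-- If A(t) is symmetric positive definite solving dA/dt = A⁻¹C + CA⁻¹ − 2A, then
d/dt ℓ(A(t))² = −4ℓ(A(t))² − 4‖A^{−1/2}(A² − C)A^{1/2}‖²_F ≤ −4ℓ(A(t))², where
ℓ(A) = ‖C − A²‖_F. -/
theorem stmt_12 {n : ℕ} (C : Matrix (Fin n) (Fin n) ℝ) (hC : C.PosDef)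
    (A : ℝ → Matrix (Fin n) (Fin n) ℝ) (hA : ∀ t : ℝ, (A t).PosDef)
    (hAode : ∀ t : ℝ, ∀ i j,
      HasDerivAt (fun s => A s i j)
        (((A t)⁻¹ * C + C * (A t)⁻¹ - (2 : ℝ) • A t) i j) t) :
    let ℓsq : ℝ → ℝ := fun t => ∑ i, ∑ j, ((C - A t * A t) i j) ^ 2
    ∀ t : ℝ,
      HasDerivAt ℓsq
        (-4 * ℓsq t - 4 * ∑ i, ∑ j,
          ((((hA t).posSemidef.sqrt)⁻¹ * (A t * A t - C) * (hA t).posSemidef.sqrt) i j) ^ 2) t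
      ∧ (-4 * ℓsq t - 4 * ∑ i, ∑ j,
          ((((hA t).posSemidef.sqrt)⁻¹ * (A t * A t - C) * (hA t).posSemidef.sqrt) i j) ^ 2)
          ≤ -4 * ℓsq t := by
  intro ℓsq t
  have hAsymm : (A t).IsSymm := isHermitian_iff_isSymm.mp (hA t).isHermitian
  have hE : (A t * A t - C).IsSymm :=
    (by simpa only [sq] using hAsymm.pow 2 : (A t * A t).IsSymm).sub
      (isHermitian_iff_isSymm.mp hC.isHermitian)
  have hℓsq : ℓsq = fun s => ∑ i, ∑ j, (A s * A s - C) i j ^ 2 := by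
    funext s
    simp only [ℓsq, ← neg_sub (A s * A s), Matrix.neg_apply, neg_sq]
  have hℓsq_t : ℓsq t = trace ((A t * A t - C) * (A t * A t - C)) := by
    simp only [hℓsq, sum_sum_sq_eq_trace_mul_transpose, hE.eq]
  have hconj :
      ∑ i, ∑ j, ((hA t).posSemidef.sqrt⁻¹ * (A t * A t - C) * (hA t).posSemidef.sqrt) i j ^ 2 =
        trace ((A t * A t - C) * A t * (A t * A t - C) * (A t)⁻¹) := by
    rw [sum_sum_sq_inv_mul_mul (hA t).posSemidef.isSymm_sqrt hE, (hA t).posSemidef.sqrt_mul_self]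
  have hderiv : ∀ i j, HasDerivAt (fun s => (A s * A s - C) i j)
      ((sqrtFlowField C (A t) * A t + A t * sqrtFlowField C (A t)) i j) t := fun i j =>
    (hasDerivAt_mul_apply (F' := sqrtFlowField C (A t)) (hAode t) (hAode t) i j).sub_const (C i j)
  have hℓsq_deriv := hasDerivAt_sum_sum_sq_apply hderiv
  rw [← hℓsq, hE.trace_mul_transpose, trace_mul_sqrtFlowField_mul_add_mul_sqrtFlowField
    (hA t).det_pos.ne'.isUnit hAsymm hE] at hℓsq_deriv
  refine ⟨hℓsq_deriv.congr_deriv (by rw [hℓsq_t, hconj]; ring), sub_le_self _ ?_⟩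
  positivity
end
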